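/- Let Q₀ be a nonempty open bounded subset of ℝ^d \ {0}, A a d×d real expansive matrix, a, τ, σ, C, L, N > 0, and let ĝ : ℝ^d → ℂ be measurable with |ĝ(ξ)| ≤ C·min{1, |ξ|^L}·(1+|ξ|)^{−N} for all ξ ∈ ℝ^d. Then for all m, n ∈ ℤ with n − m ≤ 0: M_{mn} ≤ a^{τ(m−n)} · (1 + b·λ₋^{n−m})^σ · [ C · min{1, (b·λ₋^{n−m}·R)^L} / (1 + λ₊^{n−m}·r/b)^N ]^τ. -/

import Mathlib

open MeasureTheory

noncomputable section

/-- A real square matrix is *expansive* if every complex eigenvalue has modulus `> 1`. -/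
def IsExpansive {d : ℕ} (A : Matrix (Fin d) (Fin d) ℝ) : Prop :=
  ∀ μ ∈ spectrum ℂ (A.map (Complex.ofReal)), 1 < ‖μ‖

/-- Image of a set under the linear map on Euclidean space induced by a matrix. -/
def matImage {d : ℕ} (M : Matrix (Fin d) (Fin d) ℝ) (S : Set (EuclideanSpace ℝ (Fin d))) :
    Set (EuclideanSpace ℝ (Fin d)) :=
  (Matrix.toEuclideanLin M) '' S

/-- Operator norm of a matrix acting on Euclidean space. -/
def opNorm {d : ℕ} (M : Matrix (Fin d) (Fin d) ℝ) : ℝ :=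
  ‖Matrix.toEuclideanCLM (𝕜 := ℝ) M‖

/-- `1 < λ₋ < min |σ(A)| ≤ max |σ(A)| < λ₊`. -/
def SpecBound {d : ℕ} (A : Matrix (Fin d) (Fin d) ℝ) (lm lp : ℝ) : Prop :=
  1 < lm ∧ ∀ μ ∈ spectrum ℂ (A.map (Complex.ofReal)),
    lm < ‖μ‖ ∧ ‖μ‖ < lp

/-- `b` is a comparison constant for the powers of `A`:
`(1/b)·λ₋^j·|ξ| ≤ |A^j ξ| ≤ b·λ₊^j·|ξ|` and `(1/b)·λ₊^{-j}·|ξ| ≤ |A^{-j} ξ| ≤ b·λ₋^{-j}·|ξ|`. -/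
def ExpBound {d : ℕ} (A : Matrix (Fin d) (Fin d) ℝ) (lm lp b : ℝ) : Prop :=
  ∀ (ξ : EuclideanSpace ℝ (Fin d)) (j : ℕ),
    (1 / b) * lm ^ j * ‖ξ‖ ≤ ‖Matrix.toEuclideanLin (A ^ (j : ℤ)) ξ‖ ∧
    ‖Matrix.toEuclideanLin (A ^ (j : ℤ)) ξ‖ ≤ b * lp ^ j * ‖ξ‖ ∧
    (1 / b) * lp ^ (-(j : ℤ)) * ‖ξ‖ ≤ ‖Matrix.toEuclideanLin (A ^ (-(j : ℤ))) ξ‖ ∧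
    ‖Matrix.toEuclideanLin (A ^ (-(j : ℤ))) ξ‖ ≤ b * lm ^ (-(j : ℤ)) * ‖ξ‖

/-!
Write a point of `Aⁿ Q₀` as `Aⁿ η` with `η ∈ Q₀`, so that `A⁻ᵐ (Aⁿ η) = Aⁿ⁻ᵐ η`. For `n - m ≤ 0` the
bounds on negative powers of `A` put `|Aⁿ⁻ᵐ η|` between `λ₊ⁿ⁻ᵐ r / b` and `b λ₋ⁿ⁻ᵐ R`. Since
`C min{1, t^L} (1 + t)^(-N)` is bounded by `C min{1, t'^L} / (1 + s)^N` whenever `s ≤ t ≤ t'`, the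
integrand of `M_{mn}` is bounded by the bracket on the right-hand side everywhere on `Qₙ`, hence so
is its average. The same bound on negative powers of `A` controls `‖Aⁿ⁻ᵐ‖`.
-/

section

variable {d : ℕ}

lemma IsExpansive.isUnit_det {A : Matrix (Fin d) (Fin d) ℝ} (hA : IsExpansive A) :
    IsUnit A.det := by
  have h0 : (0 : ℂ) ∉ spectrum ℂ (A.map Complex.ofReal) := fun h => by
    have := hA 0 h
    norm_num at this
  have hdet : (A.map Complex.ofReal).det = A.det := (RingHom.map_det Complex.ofRealHom A).symm
  rw [spectrum.zero_mem_iff, not_not, Matrix.isUnit_iff_isUnit_det, hdet, isUnit_iff_ne_zero,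
    Complex.ofReal_ne_zero] at h0
  exact isUnit_iff_ne_zero.mpr h0

lemma toEuclideanLin_zpow_add_apply {A : Matrix (Fin d) (Fin d) ℝ} (hA : IsUnit A.det)
    (k l : ℤ) (ξ : EuclideanSpace ℝ (Fin d)) :
    Matrix.toEuclideanLin (A ^ (k + l)) ξ =
      Matrix.toEuclideanLin (A ^ k) (Matrix.toEuclideanLin (A ^ l) ξ) := by
  rw [Matrix.zpow_add hA, Matrix.toLpLin_mul_same]
  rfl

/-- If `μ s = ∞` the factor `(μ s).toReal⁻¹` is the junk value `0`, and so is the integral of a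
non-integrable function. -/
lemma inv_toReal_mul_setIntegral_norm_le {α E : Type*} [MeasurableSpace α]
    [NormedAddCommGroup E] {μ : Measure α} {s : Set α} {f : α → E} {K : ℝ} (hK : 0 ≤ K)
    (hf : ∀ x ∈ s, ‖f x‖ ≤ K) :
    (μ s).toReal⁻¹ * ∫ x in s, ‖f x‖ ∂μ ≤ K := by
  by_cases hs : μ s < ⊤
  · have hint : ∫ x in s, ‖f x‖ ∂μ ≤ K * (μ s).toReal :=
      (le_abs_self _).trans
        (norm_setIntegral_le_of_norm_le_const (f := fun x => ‖f x‖) hs (by simpa using hf))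
    calc (μ s).toReal⁻¹ * ∫ x in s, ‖f x‖ ∂μ ≤ (μ s).toReal⁻¹ * (K * (μ s).toReal) := by
          gcongr
      _ = K * ((μ s).toReal⁻¹ * (μ s).toReal) := by ring
      _ ≤ K := mul_le_of_le_one_right hK (inv_mul_le_one_of_le₀ le_rfl ENNReal.toReal_nonneg)
  · simpa [not_lt_top_iff.mp hs] using hK

lemma mul_min_one_rpow_mul_one_add_rpow_neg_le {C L N s t t' : ℝ} (hC : 0 ≤ C) (hL : 0 ≤ L)
    (hN : 0 ≤ N) (hs : 0 ≤ s) (hst : s ≤ t) (htt' : t ≤ t') :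
    C * min 1 (t ^ L) * (1 + t) ^ (-N) ≤ C * min 1 (t' ^ L) / (1 + s) ^ N := by
  have ht : 0 ≤ t := hs.trans hst
  have ht' : 0 ≤ t' := ht.trans htt'
  rw [Real.rpow_neg (by positivity), ← div_eq_mul_inv]
  gcongr

namespace ExpBound

variable {A : Matrix (Fin d) (Fin d) ℝ} {lm lp b : ℝ}

lemma le_norm_zpow_apply_of_nonpos (h : ExpBound A lm lp b) {k : ℤ} (hk : k ≤ 0)
    (ξ : EuclideanSpace ℝ (Fin d)) :
    1 / b * lp ^ k * ‖ξ‖ ≤ ‖Matrix.toEuclideanLin (A ^ k) ξ‖ := by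
  obtain ⟨j, rfl⟩ := Int.exists_eq_neg_ofNat hk
  exact (h ξ j).2.2.1

lemma norm_zpow_apply_le_of_nonpos (h : ExpBound A lm lp b) {k : ℤ} (hk : k ≤ 0)
    (ξ : EuclideanSpace ℝ (Fin d)) :
    ‖Matrix.toEuclideanLin (A ^ k) ξ‖ ≤ b * lm ^ k * ‖ξ‖ := by
  obtain ⟨j, rfl⟩ := Int.exists_eq_neg_ofNat hk
  exact (h ξ j).2.2.2

lemma opNorm_zpow_le_of_nonpos (h : ExpBound A lm lp b) (hb : 0 < b) (hlm : 0 < lm)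
    {k : ℤ} (hk : k ≤ 0) :
    opNorm (A ^ k) ≤ b * lm ^ k :=
  ContinuousLinearMap.opNorm_le_bound _ (by positivity) (h.norm_zpow_apply_le_of_nonpos hk)

lemma upper_rate_pos (h : ExpBound A lm lp b) (hb : 0 < b) (hlm : 0 < lm)
    {ξ : EuclideanSpace ℝ (Fin d)} (hξ : ξ ≠ 0) :
    0 < lp := by
  have hle := (h ξ 1).1.trans (h ξ 1).2.1
  have : 0 < b * lp ^ 1 * ‖ξ‖ := lt_of_lt_of_le (by positivity) hle
  simpa using pos_of_mul_pos_right (pos_of_mul_pos_left this (norm_nonneg ξ)) hb.le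

end ExpBound

end

theorem homogeneous_Mmn_pointwise_nonpos_general
    (d : ℕ) (A : Matrix (Fin d) (Fin d) ℝ) (hA : IsExpansive A)
    (lm lp : ℝ) (hspec : SpecBound A lm lp)
    (b : ℝ) (hb : 0 < b) (hexp : ExpBound A lm lp b)
    (Q₀ : Set (EuclideanSpace ℝ (Fin d))) (hQne : Q₀.Nonempty)
    (r R : ℝ) (hr : 0 < r) (hrR : ∀ ξ ∈ Q₀, r ≤ ‖ξ‖ ∧ ‖ξ‖ ≤ R)
    (a τ σ C L N : ℝ) (ha : 0 < a) (hτ : 0 < τ) (hσ : 0 < σ) (hC : 0 < C)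
    (hL : 0 < L) (hN : 0 < N)
    (g : EuclideanSpace ℝ (Fin d) → ℂ)
    (hg : ∀ ξ : EuclideanSpace ℝ (Fin d),
      ‖g ξ‖ ≤ C * min 1 (‖ξ‖ ^ L) * (1 + ‖ξ‖) ^ (-N))
    (M : ℤ → ℤ → ℝ)
    (hM : ∀ m n : ℤ, M m n =
      a ^ (τ * ((m : ℝ) - (n : ℝ))) * (1 + opNorm (A ^ (n - m))) ^ σ *
        ((volume (matImage (A ^ n) Q₀)).toReal⁻¹ *
          ∫ ξ in matImage (A ^ n) Q₀,
            ‖g (Matrix.toEuclideanLin (A ^ (-m)) ξ)‖) ^ τ) :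
    ∀ m n : ℤ, n - m ≤ 0 →
      M m n ≤ a ^ (τ * ((m : ℝ) - (n : ℝ))) * (1 + b * lm ^ (n - m)) ^ σ *
        (C * min 1 ((b * lm ^ (n - m) * R) ^ L) / (1 + lp ^ (n - m) * r / b) ^ N) ^ τ := by
  intro m n hnm
  obtain ⟨η₀, hη₀⟩ := hQne
  have hlm : 0 < lm := zero_lt_one.trans hspec.1
  have hlp : 0 < lp := hexp.upper_rate_pos hb hlm (norm_pos_iff.mp (hr.trans_le (hrR η₀ hη₀).1))
  have hR : 0 ≤ R := hr.le.trans ((hrR η₀ hη₀).1.trans (hrR η₀ hη₀).2)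
  have hpoint : ∀ ξ ∈ matImage (A ^ n) Q₀, ‖g (Matrix.toEuclideanLin (A ^ (-m)) ξ)‖ ≤
      C * min 1 ((b * lm ^ (n - m) * R) ^ L) / (1 + lp ^ (n - m) * r / b) ^ N := by
    rintro _ ⟨η, hη, rfl⟩
    rw [← toEuclideanLin_zpow_add_apply hA.isUnit_det, neg_add_eq_sub]
    refine (hg _).trans (mul_min_one_rpow_mul_one_add_rpow_neg_le hC.le hL.le hN.le
      (by positivity) ?_ ?_)
    · calc lp ^ (n - m) * r / b = 1 / b * lp ^ (n - m) * r := by ring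
        _ ≤ 1 / b * lp ^ (n - m) * ‖η‖ := by gcongr; exact (hrR η hη).1
        _ ≤ _ := hexp.le_norm_zpow_apply_of_nonpos hnm η
    · calc _ ≤ b * lm ^ (n - m) * ‖η‖ := hexp.norm_zpow_apply_le_of_nonpos hnm η
        _ ≤ b * lm ^ (n - m) * R := by gcongr; exact (hrR η hη).2
  rw [hM, opNorm]
  gcongr
  · exact hexp.opNorm_zpow_le_of_nonpos hb hlm hnm
  · exact inv_toReal_mul_setIntegral_norm_le (by positivity) hpoint

/-- Pointwise estimate of `M_{mn}` for n − m ≤ 0. -/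
theorem homogeneous_Mmn_pointwise_nonpos
    (d : ℕ) (hd : 1 ≤ d) (A : Matrix (Fin d) (Fin d) ℝ) (hA : IsExpansive A)
    (lm lp : ℝ) (hspec : SpecBound A lm lp)
    (b : ℝ) (hb : 0 < b) (hexp : ExpBound A lm lp b)
    (Q₀ : Set (EuclideanSpace ℝ (Fin d))) (hQne : Q₀.Nonempty) (hQopen : IsOpen Q₀)
    (hQbdd : Bornology.IsBounded Q₀) (hQ0 : (0 : EuclideanSpace ℝ (Fin d)) ∉ Q₀)
    (r R : ℝ) (hr : 0 < r) (hrR : ∀ ξ ∈ Q₀, r ≤ ‖ξ‖ ∧ ‖ξ‖ ≤ R)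
    (a τ σ C L N : ℝ) (ha : 0 < a) (hτ : 0 < τ) (hσ : 0 < σ) (hC : 0 < C)
    (hL : 0 < L) (hN : 0 < N)
    (g : EuclideanSpace ℝ (Fin d) → ℂ) (hgm : Measurable g)
    (hg : ∀ ξ : EuclideanSpace ℝ (Fin d),
      ‖g ξ‖ ≤ C * min 1 (‖ξ‖ ^ L) * (1 + ‖ξ‖) ^ (-N))
    (M : ℤ → ℤ → ℝ)
    (hM : ∀ m n : ℤ, M m n =
      a ^ (τ * ((m : ℝ) - (n : ℝ))) * (1 + opNorm (A ^ (n - m))) ^ σ *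
        ((volume (matImage (A ^ n) Q₀)).toReal⁻¹ *
          ∫ ξ in matImage (A ^ n) Q₀,
            ‖g (Matrix.toEuclideanLin (A ^ (-m)) ξ)‖) ^ τ) :
    ∀ m n : ℤ, n - m ≤ 0 →
      M m n ≤ a ^ (τ * ((m : ℝ) - (n : ℝ))) * (1 + b * lm ^ (n - m)) ^ σ *
        (C * min 1 ((b * lm ^ (n - m) * R) ^ L) / (1 + lp ^ (n - m) * r / b) ^ N) ^ τ :=
  homogeneous_Mmn_pointwise_nonpos_general d A hA lm lp hspec b hb hexp Q₀ hQne r R hr hrR a τ σ C L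
    N ha hτ hσ hC hL hN g hg M hM
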